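/- arXiv:1906.07807 — 4 statements merged into one kernel-verified Lean document; each statement's English description precedes it below -/
import Mathlib

section
/- Let r > 0 and α ∈ ℂ with Re(α) > 0. Define G₁(x) = e^{−r x²/(2α)} ∏_{n=1}^{∞} (1 − e^{−rα(2n−1)} e^{2irx})^{−1}. Then G₁ satisfies G₁(x + iα/2)/G₁(x − iα/2) = (−2ir)·(sin(rx)/r) for all x ∈ ℂ, i.e. the trigonometric Gamma function satisfies the functional equation G(x+iα/2;α)/G(x−iα/2;α) = c·s(x) with s(x) = sin(rx)/r and c = −2ir. -/
/-!
With `q = e^{-2rα}` (so `‖q‖ < 1`) and `w = e^{2irx}`, the shift `x ↦ x ± iα/2` turns the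
`n`-th factor `1 - e^{-rα(2n+1)} e^{2ir(x ± iα/2)}` into `1 - q^{n+1} w`, resp. `1 - q^n w`.
The two absolutely convergent products therefore differ by the single factor `1 - w`, while the
Gaussian prefactors differ by `e^{-irx}`; and `e^{-irx} (1 - e^{2irx}) = -2i sin(rx)`.
-/

open Complex

section NormedField

variable {K : Type*} [NormedField K] [CompleteSpace K]

theorem tprod_inv_one_add_succ_div_tprod_inv_one_add {f : ℕ → K} (hf : Summable (‖f ·‖))
    (hf_ne : ∀ n, 1 + f n ≠ 0) :
    (∏' n, (1 + f (n + 1))⁻¹) / ∏' n, (1 + f n)⁻¹ = 1 + f 0 := by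
  have hf_succ : Summable (fun n ↦ ‖f (n + 1)‖) := (summable_nat_add_iff 1).mpr hf
  have htail_ne : ∏' n, (1 + f (n + 1)) ≠ 0 :=
    tprod_one_add_ne_zero_of_summable (fun n ↦ hf_ne (n + 1)) hf_succ
  have hprod : ∏' n, (1 + f n) = (1 + f 0) * ∏' n, (1 + f (n + 1)) :=
    tprod_eq_zero_mul' (multipliable_one_add_of_summable hf_succ)
  rw [(multipliable_one_add_of_summable hf_succ).tprod_inv₀ htail_ne,
    (multipliable_one_add_of_summable hf).tprod_inv₀ (hprod ▸ mul_ne_zero (hf_ne 0) htail_ne),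
    hprod]
  field_simp [hf_ne 0]

theorem tprod_inv_one_sub_geometric_succ_div {q w : K} (hq : ‖q‖ < 1)
    (hw : ∀ n : ℕ, 1 - q ^ n * w ≠ 0) :
    (∏' n : ℕ, (1 - q ^ (n + 1) * w)⁻¹) / ∏' n : ℕ, (1 - q ^ n * w)⁻¹ = 1 - w := by
  have hsum : Summable (fun n : ℕ ↦ ‖-(q ^ n * w)‖) := by
    simpa [norm_pow] using (summable_geometric_of_lt_one (norm_nonneg q) hq).mul_right ‖w‖
  simpa [sub_eq_add_neg] using
    tprod_inv_one_add_succ_div_tprod_inv_one_add hsum (by simpa [sub_eq_add_neg] using hw)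

end NormedField

theorem exp_gaussian_shift_div {r α : ℂ} (hα : α ≠ 0) (x : ℂ) :
    exp (-r * (x + I * α / 2) ^ 2 / (2 * α)) / exp (-r * (x - I * α / 2) ^ 2 / (2 * α)) =
      exp (-(I * (r * x))) := by
  rw [← exp_sub]
  congr 1
  field_simp
  ring

theorem exp_neg_mul_one_sub_exp_two_mul (y : ℂ) :
    exp (-(I * y)) * (1 - exp (2 * I * y)) = -2 * I * sin y := by
  have h_neg : -(I * y) = -y * I := by ring
  have h_add : -(I * y) + 2 * I * y = y * I := by ring
  rw [sin, mul_sub, mul_one, ← exp_add, h_add, h_neg]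
  linear_combination (exp (-y * I) - exp (y * I)) * I_sq

/-- The trigonometric Gamma function
`G₁(x) = e^{−rx²/(2α)} ∏_{n=1}^∞ (1 − e^{−rα(2n−1)} e^{2irx})⁻¹` satisfies the
functional equation `G₁(x+iα/2)/G₁(x−iα/2) = (−2ir)·(sin(rx)/r)`, i.e. the
Koornwinder–van Diejen functional equation with `s(x) = sin(rx)/r`, `c = −2ir`. -/
theorem trigonometric_gamma_functional_equation (r : ℝ) (hr : 0 < r) (α : ℂ) (hα : 0 < α.re)
    (x : ℂ)
    (hx : ∀ n : ℕ, Complex.exp (2 * I * (r : ℂ) * x) ≠ Complex.exp (2 * (r : ℂ) * α * (n : ℂ))) :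
    (Complex.exp (-(r : ℂ) * (x + I * α / 2) ^ 2 / (2 * α)) *
      ∏' n : ℕ, (1 - Complex.exp (-(r : ℂ) * α * (2 * (n : ℂ) + 1)) *
        Complex.exp (2 * I * (r : ℂ) * (x + I * α / 2)))⁻¹) /
    (Complex.exp (-(r : ℂ) * (x - I * α / 2) ^ 2 / (2 * α)) *
      ∏' n : ℕ, (1 - Complex.exp (-(r : ℂ) * α * (2 * (n : ℂ) + 1)) *
        Complex.exp (2 * I * (r : ℂ) * (x - I * α / 2)))⁻¹)
    = (-2 * I * (r : ℂ)) * (Complex.sin ((r : ℂ) * x) / (r : ℂ)) := by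
  have hr0 : (r : ℂ) ≠ 0 := ofReal_ne_zero.mpr hr.ne'
  have hα0 : α ≠ 0 := by rintro rfl; simp at hα
  set q := exp (-2 * r * α)
  set w := exp (2 * I * r * x) with hw_def
  have hq : ‖q‖ < 1 := by
    rw [norm_exp, Real.exp_lt_one_iff]
    simpa using mul_pos (mul_pos two_pos hr) hα
  have hw : ∀ n : ℕ, 1 - q ^ n * w ≠ 0 := fun n h ↦ hx n <| by
    have hqn : q ^ n * exp (2 * r * α * n) = 1 := by
      rw [← exp_nat_mul, ← exp_add, ← exp_zero]
      ring_nf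
    exact mul_left_cancel₀ (pow_ne_zero n (exp_ne_zero _)) ((sub_eq_zero.mp h).symm.trans hqn.symm)
  have hnum (n : ℕ) : exp (-r * α * (2 * n + 1)) * exp (2 * I * r * (x + I * α / 2)) =
      q ^ (n + 1) * w := by
    rw [← exp_nat_mul, ← exp_add, ← exp_add]
    congr 1
    push_cast
    linear_combination (r * α) * I_sq
  have hden (n : ℕ) : exp (-r * α * (2 * n + 1)) * exp (2 * I * r * (x - I * α / 2)) =
      q ^ n * w := by
    rw [← exp_nat_mul, ← exp_add, ← exp_add]
    congr 1
    linear_combination (-r * α) * I_sq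
  simp only [hnum, hden]
  rw [mul_div_mul_comm, exp_gaussian_shift_div hα0, tprod_inv_one_sub_geometric_succ_div hq hw,
    hw_def, mul_assoc (2 * I), exp_neg_mul_one_sub_exp_two_mul]
  field_simp
end

section
/- For every x ∈ ℂ ∖ ℤ_{≤0}, the Euler Gamma function has the Euler product representation Γ(x) = (1/x) ∏_{n=1}^{∞} (1 + 1/n)^x (1 + x/n)^{−1}, the infinite product converging for all such x. -/
/-!
Writing the `n`-th factor as `exp (x log (1 + 1/n) - log (1 + x/n))` and using
`log (1 + z) = z + O(z²)`, the exponents are `O(1/n²)`, so the product converges. The factors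
`(1 + 1/k)^x` telescope to `(n + 1)^x`, so the `n`-th partial product is
`(n + 1)^x n! / ((x + 1) ⋯ (x + n))`; up to a factor `1 + x/(n + 1) → 1` this is
`x · GammaSeq x (n + 1)`, which tends to `x Γ(x)` by Gauss's limit formula.
-/

open Complex Filter Finset Topology

lemma summable_log_one_add_sub_self {ι : Type*} {z : ι → ℂ} (hz : Summable fun i ↦ ‖z i‖ ^ 2) :
    Summable fun i ↦ log (1 + z i) - z i := by
  have hz0 : Tendsto z cofinite (𝓝 0) := by
    rw [tendsto_zero_iff_norm_tendsto_zero]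
    simpa using hz.tendsto_cofinite_zero.sqrt
  refine summable_of_isBigO hz ?_
  simpa [Function.comp_def] using (log_sub_self_isBigO.comp_tendsto hz0).norm_right

lemma summable_log_one_add_div_succ_sub_self (c : ℂ) :
    Summable fun n : ℕ ↦ log (1 + c / (n + 1)) - c / (n + 1) := by
  refine summable_log_one_add_sub_self ?_
  have h := (summable_nat_add_iff 1).2 (Real.summable_one_div_nat_pow.2 one_lt_two)
  refine (h.mul_left (‖c‖ ^ 2)).congr fun n ↦ ?_
  rw [mul_one_div, norm_div, div_pow, ← Nat.cast_add_one, norm_natCast]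

noncomputable def eulerFactor (x : ℂ) (n : ℕ) : ℂ :=
  (1 + 1 / ((n : ℂ) + 1)) ^ x * (1 + x / ((n : ℂ) + 1))⁻¹

lemma one_add_div_natCast_succ_ne_zero {x : ℂ} (hx : ∀ n : ℕ, x ≠ -(n : ℂ)) (n : ℕ) :
    1 + x / ((n : ℂ) + 1) ≠ 0 := by
  have hn : (n : ℂ) + 1 ≠ 0 := by exact_mod_cast n.succ_ne_zero
  intro h
  apply hx (n + 1)
  field_simp at h
  push_cast
  linear_combination h

lemma eulerFactor_eq_exp {x : ℂ} (hx : ∀ n : ℕ, x ≠ -(n : ℂ)) (n : ℕ) :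
    eulerFactor x n = exp (log (1 + 1 / ((n : ℂ) + 1)) * x - log (1 + x / ((n : ℂ) + 1))) := by
  have h1 : (1 : ℂ) + 1 / ((n : ℂ) + 1) ≠ 0 := by
    rw [← ofReal_natCast]; norm_cast; positivity
  rw [eulerFactor, ← div_eq_mul_inv, cpow_def_of_ne_zero h1, exp_sub,
    exp_log (one_add_div_natCast_succ_ne_zero hx n)]

lemma multipliable_eulerFactor {x : ℂ} (hx : ∀ n : ℕ, x ≠ -(n : ℂ)) :
    Multipliable (eulerFactor x) := by
  have hlog : Summable fun n : ℕ ↦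
      log (1 + 1 / ((n : ℂ) + 1)) * x - log (1 + x / ((n : ℂ) + 1)) := by
    refine (((summable_log_one_add_div_succ_sub_self 1).mul_right x).sub
      (summable_log_one_add_div_succ_sub_self x)).congr fun n ↦ ?_
    ring
  rw [show eulerFactor x = _ from funext (eulerFactor_eq_exp hx)]
  exact hlog.hasSum.cexp.multipliable

lemma prod_range_one_add_one_div_natCast_succ_cpow (x : ℂ) (n : ℕ) :
    ∏ i ∈ range n, (1 + 1 / ((i : ℂ) + 1)) ^ x = ((n : ℂ) + 1) ^ x := by
  induction n with
  | zero => simp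
  | succ n ih =>
    have key : ((n + 1 : ℝ) : ℂ) * ((1 + 1 / (n + 1) : ℝ) : ℂ) = ((n + 1 : ℕ) : ℂ) + 1 := by
      push_cast
      field_simp
    rw [prod_range_succ, ih, ← key, mul_cpow_ofReal_nonneg (by positivity) (by positivity)]
    push_cast
    rfl

lemma mul_GammaSeq_succ {x : ℂ} (hx : x ≠ 0) (n : ℕ) :
    x * GammaSeq x (n + 1) = (∏ i ∈ range n, eulerFactor x i) * (1 + x / ((n : ℂ) + 1))⁻¹ := by
  have hinv (i : ℕ) : (1 + x / ((i : ℂ) + 1))⁻¹ = ((i : ℂ) + 1) / (x + ((i : ℂ) + 1)) := by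
    have hi : (i : ℂ) + 1 ≠ 0 := by exact_mod_cast i.succ_ne_zero
    rw [one_add_div hi, inv_div, add_comm ((i : ℂ) + 1) x]
  simp only [eulerFactor, prod_mul_distrib, prod_range_one_add_one_div_natCast_succ_cpow]
  rw [mul_assoc, ← prod_range_succ (fun i : ℕ ↦ (1 + x / ((i : ℂ) + 1))⁻¹), GammaSeq,
    prod_range_succ']
  simp only [hinv, prod_div_distrib]
  rw [← prod_range_add_one_eq_factorial]
  push_cast
  rw [add_zero, mul_comm _ x, ← div_div, ← mul_div_assoc, mul_div_cancel₀ _ hx, mul_div_assoc]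

lemma tendsto_prod_range_eulerFactor {x : ℂ} (hx : x ≠ 0) :
    Tendsto (fun n ↦ ∏ i ∈ range n, eulerFactor x i) atTop (𝓝 (x * Gamma x)) := by
  have hGamma : Tendsto (fun n ↦ x * GammaSeq x (n + 1)) atTop (𝓝 (x * Gamma x)) :=
    ((tendsto_add_atTop_iff_nat 1).2 (GammaSeq_tendsto_Gamma x)).const_mul x
  have hcorr : Tendsto (fun n : ℕ ↦ (1 + x / ((n : ℂ) + 1))⁻¹) atTop (𝓝 1) := by
    simpa [div_eq_mul_inv] using
      (((tendsto_one_div_add_atTop_nhds_zero_nat (𝕜 := ℂ)).const_mul x).const_add 1).inv₀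
        (by simp)
  rw [← tendsto_mul_iff_of_ne_zero hcorr one_ne_zero, mul_one]
  simpa only [mul_GammaSeq_succ hx] using hGamma

/-- Euler product representation of the Gamma function:
for `x ∉ ℤ_{≤0}`, `Γ(x) = (1/x) ∏_{n=1}^∞ (1 + 1/n)^x (1 + x/n)⁻¹`,
the product (indexed here by `n : ℕ`, with `n+1 = 1, 2, …`) converging. -/
theorem gamma_euler_product (x : ℂ) (hx : ∀ n : ℕ, x ≠ -(n : ℂ)) :
    Multipliable (fun n : ℕ =>
      (1 + 1 / ((n : ℂ) + 1)) ^ x * (1 + x / ((n : ℂ) + 1))⁻¹) ∧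
    Complex.Gamma x =
      (1 / x) * ∏' n : ℕ, (1 + 1 / ((n : ℂ) + 1)) ^ x * (1 + x / ((n : ℂ) + 1))⁻¹ := by
  change Multipliable (eulerFactor x) ∧ Gamma x = 1 / x * ∏' n, eulerFactor x n
  have hx0 : x ≠ 0 := by simpa using hx 0
  have hmul := multipliable_eulerFactor hx
  refine ⟨hmul, ?_⟩
  rw [tendsto_nhds_unique hmul.hasProd.tendsto_prod_nat (tendsto_prod_range_eulerFactor hx0)]
  field_simp
end

section
/- Let γ, m, a, c, d, n₀, n₁ ∈ ℂ with c ≠ d, and let X ∈ ℂ be such that all denominators below are nonzero. Then the rational-case key identity holds for one variable: γm · Σ_{ε=±1} [(εX − γm/2)/(εX)] · [(εX + a − c − n₀)/(εX + a − c)] · [(εX + a − d − n₁)/(εX + a − d)] − { [(X + c − a − γm)(−X + c − a − γm)]/[(X + c − a)(−X + c − a)] · (−n₀) · (c − d − n₁)/(c − d) + [(X + d − a − γm)(−X + d − a − γm)]/[(X + d − a)(−X + d − a)] · (d − c − n₀)/(d − c) · (−n₁) } = 2γm + n₀ + n₁. -/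
/-- The `𝒩 = 1` rational case (`s(x) = x`, `ρ = 0`, `ω₀ = 0`) of the key functional
identity, as an identity of rational functions of `X` at points where no
denominator vanishes. The sum over `ε = ±1` is written out explicitly. -/
theorem key_identity_rational_N1 (γ m a c d n₀ n₁ X : ℂ)
    (hcd : c ≠ d) (hX : X ≠ 0)
    (h1 : X + a - c ≠ 0) (h2 : -X + a - c ≠ 0)
    (h3 : X + a - d ≠ 0) (h4 : -X + a - d ≠ 0) :
    γ * m * (((X - γ * m / 2) * (X + a - c - n₀) * (X + a - d - n₁)) /
        (X * (X + a - c) * (X + a - d))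
      + ((-X - γ * m / 2) * (-X + a - c - n₀) * (-X + a - d - n₁)) /
        ((-X) * (-X + a - c) * (-X + a - d)))
    - (((X + c - a - γ * m) * (-X + c - a - γ * m)) /
          ((X + c - a) * (-X + c - a)) * (-n₀) * (c - d - n₁) / (c - d)
      + ((X + d - a - γ * m) * (-X + d - a - γ * m)) /
          ((X + d - a) * (-X + d - a)) * (d - c - n₀) / (d - c) * (-n₁))
    = 2 * γ * m + n₀ + n₁ := by
  have hc₁ : X + c - a ≠ 0 := fun h => h2 (by linear_combination -h)
  have hc₂ : -X + c - a ≠ 0 := fun h => h1 (by linear_combination -h)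
  have hd₁ : X + d - a ≠ 0 := fun h => h4 (by linear_combination -h)
  have hd₂ : -X + d - a ≠ 0 := fun h => h3 (by linear_combination -h)
  have hcd' : c - d ≠ 0 := sub_ne_zero.2 hcd
  have hdc : d - c ≠ 0 := sub_ne_zero.2 hcd.symm
  field_simp
  ring
end

section
/- Let 𝒩 ≥ 0 be an integer, and let γ, c, d ∈ ℂ with c ≠ d, n₀, n₁ ∈ ℂ, m₁,…,m_𝒩 ∈ ℂ, a₁,…,a_𝒩 ∈ ℂ. Then the following identity of rational functions in X₁,…,X_𝒩 holds (at all points where no denominator vanishes): Σ_{ε=±1} Σ_{J=1}^{𝒩} γ m_J · ∏_{δ=±1} ∏_{K≠J} [(X_J + δX_K + ε(a_J − a_K − γm_K))/(X_J + δX_K + ε(a_J − a_K))] · [(εX_J − γm_J/2)(εX_J + a_J − c − n₀)(εX_J + a_J − d − n₁)] / [εX_J · (εX_J + a_J − c)(εX_J + a_J − d)] − { [∏_{δ=±1} ∏_{J=1}^{𝒩} (δX_J + c − a_J − γm_J)/(δX_J + c − a_J)] · (−n₀)(c − d − n₁)/(c − d) + [∏_{δ=±1} ∏_{J=1}^{𝒩}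 (δX_J + d − a_J − γm_J)/(δX_J + d − a_J)] · (d − c − n₀)(−n₁)/(d − c) } = 2γ Σ_{J=1}^{𝒩} m_J + n₀ + n₁. -/
/-!
With poles `v = (a_J + X_J, a_J - X_J, c, d)` and zeros
`w = (a_J + γ m_J + X_J, a_J + γ m_J - X_J, c + n₀, d + n₁)`, the left-hand side is minus the
sum of the residues of `R(z) = ∏ (z - w_i) / (z - v_i)`, and the right-hand side is `∑ w - ∑ v`.
Since `R(z) = 1 + (∑ v - ∑ w) / z + O(z⁻²)`, Liouville's theorem gives `∑ res R = ∑ v - ∑ w`.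
Algebraically this is Lagrange interpolation at the nodes `v` of `∏ (z - w_i) - ∏ (z - v_i)`,
a polynomial of degree below the number of nodes whose subleading coefficient is `∑ v - ∑ w`.
-/

open Finset

section Residue

variable {F ι : Type*} [Field F] [Fintype ι] [DecidableEq ι]

/-- The residue at `v i` of `∏ j, (z - w j) / (z - v j)`, when the `v j` are distinct. -/
def residue (v w : ι → F) (i : ι) : F :=
  (v i - w i) * ∏ j ∈ univ.erase i, (v i - w j) / (v i - v j)

theorem residue_eq_div (v w : ι → F) (i : ι) :
    residue v w i = (∏ j, (v i - w j)) / ∏ j ∈ univ.erase i, (v i - v j) := by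
  rw [residue, prod_div_distrib, ← mul_div_assoc,
    mul_prod_erase univ (fun j => v i - w j) (mem_univ i)]

open Polynomial in
theorem sum_residue {v : ι → F} (w : ι → F) (hv : Function.Injective v) :
    ∑ i, residue v w i = ∑ i, v i - ∑ i, w i := by
  rcases isEmpty_or_nonempty ι with _ | _
  · simp
  set P := Lagrange.nodal univ w - Lagrange.nodal univ v
  have hdeg : P.degree < #(univ : Finset ι) := by
    rw [← Lagrange.degree_nodal (s := univ) (v := w)]
    exact degree_sub_lt_left (by simp only [Lagrange.degree_nodal]) Lagrange.nodal_ne_zero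
      (by simp only [Lagrange.nodal_monic.leadingCoeff])
  have hcoeff (u : ι → F) :
      (Lagrange.nodal univ u).coeff (#(univ : Finset ι) - 1) = -∑ i, u i := by
    rw [Lagrange.nodal_eq]
    exact prod_X_sub_C_coeff_card_pred _ _ univ_nonempty.card_pos
  have hinterp := Lagrange.coeff_eq_sum hv.injOn hdeg
  simp only [P, coeff_sub, hcoeff, eval_sub, Lagrange.eval_nodal,
    Lagrange.eval_nodal_at_node (mem_univ _), sub_zero] at hinterp
  simp only [residue_eq_div, ← hinterp]
  ring

end Residue

section SumSumBool

variable {α M : Type*} [Fintype α] [DecidableEq α] [CommMonoid M] (g : α ⊕ α ⊕ Bool → M)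

theorem prod_erase_inl (J : α) :
    ∏ j ∈ univ.erase (.inl J), g j = (∏ K ∈ univ.erase J, g (.inl K) * g (.inr (.inl K))) *
      (g (.inr (.inl J)) * (g (.inr (.inr true)) * g (.inr (.inr false)))) := by
  have : univ.erase (.inl J) = (univ.erase J).disjSum (univ : Finset (α ⊕ Bool)) := by
    ext (_ | _) <;> simp
  rw [this, prod_disjSum, Fintype.prod_sum_type, Fintype.prod_bool,
    ← mul_prod_erase univ (fun K => g (.inr (.inl K))) (mem_univ J), prod_mul_distrib]
  ac_rfl

theorem prod_erase_inr_inl (J : α) :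
    ∏ j ∈ univ.erase (.inr (.inl J)), g j =
      (∏ K ∈ univ.erase J, g (.inl K) * g (.inr (.inl K))) *
        (g (.inl J) * (g (.inr (.inr true)) * g (.inr (.inr false)))) := by
  have : univ.erase (.inr (.inl J)) =
      (univ : Finset α).disjSum ((univ.erase J).disjSum (univ : Finset Bool)) := by
    ext (_ | _ | _) <;> simp
  rw [this, prod_disjSum, prod_disjSum, Fintype.prod_bool,
    ← mul_prod_erase univ (fun K => g (.inl K)) (mem_univ J), prod_mul_distrib]
  ac_rfl

theorem prod_erase_inr_inr (b : Bool) :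
    ∏ j ∈ univ.erase (.inr (.inr b)), g j =
      (∏ K, g (.inl K) * g (.inr (.inl K))) * g (.inr (.inr !b)) := by
  have : univ.erase (.inr (.inr b)) =
      (univ : Finset α).disjSum ((univ : Finset α).disjSum {!b}) := by
    ext (_ | _ | _ | _) <;> cases b <;> simp
  rw [this, prod_disjSum, prod_disjSum, prod_singleton, prod_mul_distrib, mul_assoc]

end SumSumBool

section Poles

variable {F α : Type*} [Field F]

def poles (a X : α → F) (c d : F) : α ⊕ α ⊕ Bool → F :=
  Sum.elim (a + X) (Sum.elim (a - X) fun b => cond b c d)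

theorem sum_poles [Fintype α] (a X : α → F) (c d : F) :
    ∑ i, poles a X c d i = 2 * ∑ J, a J + c + d := by
  simp only [poles, Fintype.sum_sum_type, Sum.elim_inl, Sum.elim_inr, Pi.add_apply,
    Pi.sub_apply, Fintype.sum_bool, cond_true, cond_false, sum_add_distrib, sum_sub_distrib]
  ring

theorem poles_injective [CharZero F] {a X : α → F} {c d : F} (hX : ∀ J, X J ≠ 0)
    (hcd : c ≠ d)
    (hc : ∀ J (ε : F), ε = 1 ∨ ε = -1 → ε * X J + a J - c ≠ 0 ∧ ε * X J + a J - d ≠ 0)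
    (hpair : ∀ J K, K ≠ J → ∀ (δ ε : F), δ = 1 ∨ δ = -1 → ε = 1 ∨ ε = -1 →
      X J + δ * X K + ε * (a J - a K) ≠ 0) :
    Function.Injective (poles a X c d) := by
  have hne (ε : F) (J : α) (b : Bool) (hε : ε = 1 ∨ ε = -1) : a J + ε * X J ≠ cond b c d := by
    cases b <;> intro h <;> simp only [cond_false, cond_true] at h
    · exact (hc J ε hε).2 (by linear_combination h)
    · exact (hc J ε hε).1 (by linear_combination h)
  refine .sumElim ?_ (.sumElim ?_ ?_ ?_) ?_
  · intro J K h
    by_contra hJK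
    simp only [Pi.add_apply] at h
    exact hpair J K (Ne.symm hJK) (-1) 1 (.inr rfl) (.inl rfl) (by linear_combination h)
  · intro J K h
    by_contra hJK
    simp only [Pi.sub_apply] at h
    exact hpair J K (Ne.symm hJK) (-1) (-1) (.inr rfl) (.inr rfl) (by linear_combination -h)
  · rintro (_ | _) (_ | _) h
    exacts [rfl, absurd h hcd.symm, absurd h hcd, rfl]
  · intro J b h
    simp only [Pi.sub_apply] at h
    exact hne (-1) J b (.inr rfl) (by linear_combination h)
  · rintro J (K | b) h <;> simp only [Pi.add_apply, Pi.sub_apply, Sum.elim_inl, Sum.elim_inr] at h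
    · obtain rfl | hJK := eq_or_ne J K
      · exact hX J (by linear_combination h / 2)
      · exact hpair J K (Ne.symm hJK) 1 1 (.inl rfl) (.inl rfl) (by linear_combination h)
    · exact hne 1 J b (.inl rfl) (by linear_combination h)

variable [Fintype α] [DecidableEq α] (γ c d n₀ n₁ : F) (m a X : α → F)

theorem residue_poles_c :
    residue (poles a X c d) (poles (a + γ • m) X (c + n₀) (d + n₁)) (.inr (.inr true)) =
      (∏ J, ((X J + c - a J - γ * m J) / (X J + c - a J) *
          ((-X J + c - a J - γ * m J) / (-X J + c - a J)))) *
        (-n₀) * (c - d - n₁) / (c - d) := by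
  rw [residue, prod_erase_inr_inr, prod_congr rfl (g := fun J =>
    (X J + c - a J - γ * m J) / (X J + c - a J) *
      ((-X J + c - a J - γ * m J) / (-X J + c - a J))) ?pair]
  case pair =>
    intro K _
    simp only [poles, Sum.elim_inl, Sum.elim_inr, Pi.add_apply, Pi.sub_apply, Pi.smul_apply,
      smul_eq_mul, cond_true]
    rw [div_mul_div_comm, div_mul_div_comm]
    ring
  simp only [poles, Sum.elim_inr, cond_true, cond_false, Bool.not_true]
  ring

theorem residue_poles_d :
    residue (poles a X c d) (poles (a + γ • m) X (c + n₀) (d + n₁)) (.inr (.inr false)) =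
      (∏ J, ((X J + d - a J - γ * m J) / (X J + d - a J) *
          ((-X J + d - a J - γ * m J) / (-X J + d - a J)))) *
        (d - c - n₀) * (-n₁) / (d - c) := by
  rw [residue, prod_erase_inr_inr, prod_congr rfl (g := fun J =>
    (X J + d - a J - γ * m J) / (X J + d - a J) *
      ((-X J + d - a J - γ * m J) / (-X J + d - a J))) ?pair]
  case pair =>
    intro K _
    simp only [poles, Sum.elim_inl, Sum.elim_inr, Pi.add_apply, Pi.sub_apply, Pi.smul_apply,
      smul_eq_mul, cond_false]
    rw [div_mul_div_comm, div_mul_div_comm]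
    ring
  simp only [poles, Sum.elim_inr, cond_true, cond_false, Bool.not_false]
  ring

variable [CharZero F]

theorem residue_poles_inl (J : α) :
    residue (poles a X c d) (poles (a + γ • m) X (c + n₀) (d + n₁)) (.inl J) =
      -(γ * m J *
        (∏ K ∈ univ.erase J,
          ((X J + X K + (a J - a K - γ * m K)) / (X J + X K + (a J - a K)) *
           ((X J - X K + (a J - a K - γ * m K)) / (X J - X K + (a J - a K))))) *
        (((X J - γ * m J / 2) * (X J + a J - c - n₀) * (X J + a J - d - n₁)) /
          (X J * (X J + a J - c) * (X J + a J - d)))) := by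
  rw [residue, prod_erase_inl, prod_congr rfl (g := fun K =>
    (X J + X K + (a J - a K - γ * m K)) / (X J + X K + (a J - a K)) *
      ((X J - X K + (a J - a K - γ * m K)) / (X J - X K + (a J - a K)))) ?pair]
  case pair =>
    intro K _
    simp only [poles, Sum.elim_inl, Sum.elim_inr, Pi.add_apply, Pi.sub_apply, Pi.smul_apply,
      smul_eq_mul]
    rw [div_mul_div_comm, div_mul_div_comm]
    ring
  simp only [poles, Sum.elim_inl, Sum.elim_inr, Pi.add_apply, Pi.sub_apply, Pi.smul_apply,
    smul_eq_mul, cond_true, cond_false]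
  rw [mul_div_mul_comm, mul_div_mul_comm]
  ring

theorem residue_poles_inr_inl (J : α) :
    residue (poles a X c d) (poles (a + γ • m) X (c + n₀) (d + n₁)) (.inr (.inl J)) =
      -(γ * m J *
        (∏ K ∈ univ.erase J,
          ((X J + X K - (a J - a K - γ * m K)) / (X J + X K - (a J - a K)) *
           ((X J - X K - (a J - a K - γ * m K)) / (X J - X K - (a J - a K))))) *
        (((-X J - γ * m J / 2) * (-X J + a J - c - n₀) * (-X J + a J - d - n₁)) /
          ((-X J) * (-X J + a J - c) * (-X J + a J - d)))) := by
  rw [residue, prod_erase_inr_inl, prod_congr rfl (g := fun K =>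
    (X J + X K - (a J - a K - γ * m K)) / (X J + X K - (a J - a K)) *
      ((X J - X K - (a J - a K - γ * m K)) / (X J - X K - (a J - a K)))) ?pair]
  case pair =>
    intro K _
    simp only [poles, Sum.elim_inl, Sum.elim_inr, Pi.add_apply, Pi.sub_apply, Pi.smul_apply,
      smul_eq_mul]
    rw [div_mul_div_comm, div_mul_div_comm]
    ring
  simp only [poles, Sum.elim_inl, Sum.elim_inr, Pi.add_apply, Pi.sub_apply, Pi.smul_apply,
    smul_eq_mul, cond_true, cond_false]
  rw [mul_div_mul_comm, mul_div_mul_comm]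
  ring

end Poles

/-- The key functional identity (Lemma 3.1 of the paper) in the rational case
`s(x) = x`, `ρ = 0`, `ω₀ = 0`: for any `𝒩 ≥ 0`, `γ, c, d, n₀, n₁ ∈ ℂ` with `c ≠ d`
and any `m_J, a_J, X_J ∈ ℂ` at which no denominator vanishes, the stated identity
of rational functions holds.  The sums and products over `ε, δ = ±1` are written
out explicitly. -/
theorem key_identity_rational (𝒩 : ℕ) (γ c d n₀ n₁ : ℂ) (hcd : c ≠ d)
    (m a X : Fin 𝒩 → ℂ)
    (hX : ∀ J, X J ≠ 0)
    (hcden : ∀ (J) (ε : ℂ), ε = 1 ∨ ε = -1 →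
      ε * X J + a J - c ≠ 0 ∧ ε * X J + a J - d ≠ 0 ∧
      ε * X J + c - a J ≠ 0 ∧ ε * X J + d - a J ≠ 0)
    (hpair : ∀ J K, K ≠ J → ∀ (δ ε : ℂ), δ = 1 ∨ δ = -1 → ε = 1 ∨ ε = -1 →
      X J + δ * X K + ε * (a J - a K) ≠ 0) :
    (∑ J, (γ * m J *
        (∏ K ∈ univ.erase J,
          ((X J + X K + (a J - a K - γ * m K)) / (X J + X K + (a J - a K)) *
           ((X J - X K + (a J - a K - γ * m K)) / (X J - X K + (a J - a K))))) *
        (((X J - γ * m J / 2) * (X J + a J - c - n₀) * (X J + a J - d - n₁)) /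
          (X J * (X J + a J - c) * (X J + a J - d)))
      + γ * m J *
        (∏ K ∈ univ.erase J,
          ((X J + X K - (a J - a K - γ * m K)) / (X J + X K - (a J - a K)) *
           ((X J - X K - (a J - a K - γ * m K)) / (X J - X K - (a J - a K))))) *
        (((-X J - γ * m J / 2) * (-X J + a J - c - n₀) * (-X J + a J - d - n₁)) /
          ((-X J) * (-X J + a J - c) * (-X J + a J - d)))))
    - ((∏ J, ((X J + c - a J - γ * m J) / (X J + c - a J) *
          ((-X J + c - a J - γ * m J) / (-X J + c - a J)))) *
        (-n₀) * (c - d - n₁) / (c - d)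
      + (∏ J, ((X J + d - a J - γ * m J) / (X J + d - a J) *
          ((-X J + d - a J - γ * m J) / (-X J + d - a J)))) *
        (d - c - n₀) * (-n₁) / (d - c))
    = 2 * γ * (∑ J, m J) + n₀ + n₁ := by
  have hv : Function.Injective (poles a X c d) :=
    poles_injective hX hcd (fun J ε hε => ⟨(hcden J ε hε).1, (hcden J ε hε).2.1⟩) hpair
  have key := sum_residue (poles (a + γ • m) X (c + n₀) (d + n₁)) hv
  rw [sum_poles, sum_poles] at key
  simp only [Fintype.sum_sum_type, Fintype.sum_bool, residue_poles_inl, residue_poles_inr_inl,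
    residue_poles_c, residue_poles_d, Pi.add_apply, Pi.smul_apply, smul_eq_mul, sum_add_distrib,
    ← mul_sum, sum_neg_distrib] at key
  rw [sum_add_distrib]
  linear_combination -key
end
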